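/- Let q ∈ (0,1) and θ > 0, and set D(θ) = log q + log(1−q) + Ψ_q(θ). Define ϱ : (0,1) → ℝ by ϱ(α) = −1 + 2 log q / (log q + log(1−q) + Ψ_q(log α / log q)) and the steady state current j̃(α) = −α(1 + ϱ(α)). Then ϱ and j̃ are differentiable on (0,1) with ϱ' nonvanishing, the function h(α) := j̃'(α)/ϱ'(α) is differentiable at α = q^θ, and the KPZ coefficient λ = −d²j/dϱ², computed as λ = −h'(q^θ)/ϱ'(q^θ), equals q^θ (Ψ_q'(θ) log q − Ψ_q''(θ)) D(θ)³ / (2 Ψ_q'(θ)³). -/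

import Mathlib

/-!
Write `L = log q` and `P(α) = L + log (1 - q) + Ψ_q(log α / L)`, so that `ϱ = -1 + 2L / P` and
`j̃ = -α (1 + ϱ) = -2Lα / P`. For any such pair `j̃' / ϱ' = P / P' - α`, hence
`(j̃' / ϱ')' = -P P'' / P'²` and `λ = -P³ P'' / (2L P'³)`. The chain rule through `z = log α / L`
gives `P' = Ψ_q'(z) / (αL)` and `P'' = (Ψ_q''(z) - L Ψ_q'(z)) / (αL)²`, and the formula follows.
That `Ψ_q'` and `Ψ_q''` are the derivatives of `Ψ_q` and `Ψ_q'` is termwise differentiation of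
`∑ₖ g(q^(z+k))`: when `g 0 = 0` and `g'` is bounded on `[0, q^(z₀/2)]`, both the terms and their
derivatives are dominated by a geometric series on `z > z₀ / 2`.
-/

open Real Set Filter Topology

section TermwiseSeries

variable {q : ℝ} {g g' : ℝ → ℝ}

lemma rpow_add_natCast_mem_Ioo (hq : q ∈ Ioo 0 1) {z : ℝ} (hz : 0 < z) (k : ℕ) :
    q ^ (z + k) ∈ Ioo 0 1 :=
  ⟨rpow_pos_of_pos hq.1 _, rpow_lt_one hq.1.le hq.2 (by positivity)⟩

lemma rpow_add_natCast_mem_Icc (hq : q ∈ Ioo 0 1) {a y : ℝ} (hay : a ≤ y) (k : ℕ) :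
    q ^ (y + k) ∈ Icc 0 (q ^ a) :=
  ⟨(rpow_pos_of_pos hq.1 _).le,
    rpow_le_rpow_of_exponent_ge hq.1 hq.2.le (by have := k.cast_nonneg (α := ℝ); linarith)⟩

lemma rpow_add_natCast_le (hq : q ∈ Ioo 0 1) {a y : ℝ} (hay : a ≤ y) (k : ℕ) :
    q ^ (y + k) ≤ q ^ a * q ^ k := by
  rw [rpow_add hq.1, rpow_natCast]
  exact mul_le_mul_of_nonneg_right (rpow_le_rpow_of_exponent_ge hq.1 hq.2.le hay)
    (pow_pos hq.1 k).le

lemma exists_norm_le_on_Icc_rpow (hq : q ∈ Ioo 0 1) {a : ℝ} (ha : 0 < a)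
    (hg' : ContinuousOn g' (Iio 1)) : ∃ M, ∀ w ∈ Icc 0 (q ^ a), ‖g' w‖ ≤ M :=
  isCompact_Icc.exists_bound_of_continuousOn <|
    hg'.mono fun _ hw => hw.2.trans_lt (rpow_lt_one hq.1.le hq.2 ha)

variable (hg : ∀ w ∈ Iio 1, HasDerivAt g (g' w) w) (hg' : ContinuousOn g' (Iio 1))
include hg hg'

lemma summable_comp_rpow_add (hq : q ∈ Ioo 0 1) (hg0 : g 0 = 0) {z : ℝ} (hz : 0 < z) :
    Summable fun k : ℕ => g (q ^ (z + k)) := by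
  obtain ⟨M, hM⟩ := exists_norm_le_on_Icc_rpow hq hz hg'
  have hqz := rpow_lt_one hq.1.le hq.2 hz
  have hlip : ∀ w ∈ Icc 0 (q ^ z), ‖g w‖ ≤ M * w := by
    simpa [hg0] using norm_image_sub_le_of_norm_deriv_le_segment' (a := 0) (b := q ^ z)
      (fun w hw => (hg w (hw.2.trans_lt hqz)).hasDerivWithinAt)
      (fun w hw => hM w (Ico_subset_Icc_self hw))
  have hM0 : 0 ≤ M := (norm_nonneg _).trans (hM 0 ⟨le_rfl, (rpow_pos_of_pos hq.1 z).le⟩)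
  refine .of_norm_bounded ((summable_geometric_of_lt_one hq.1.le hq.2).mul_left (M * q ^ z))
    fun k => ?_
  calc ‖g (q ^ (z + k))‖ ≤ M * q ^ (z + k) := hlip _ (rpow_add_natCast_mem_Icc hq le_rfl k)
    _ ≤ M * (q ^ z * q ^ k) := by gcongr; exact rpow_add_natCast_le hq le_rfl k
    _ = M * q ^ z * q ^ k := by ring

lemma hasDerivAt_tsum_comp_rpow_add (hq : q ∈ Ioo 0 1) (hg0 : g 0 = 0) {z : ℝ} (hz : 0 < z) :
    HasDerivAt (fun z : ℝ => ∑' k : ℕ, g (q ^ (z + k)))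
      (log q * ∑' k : ℕ, q ^ (z + k) * g' (q ^ (z + k))) z := by
  have hz2 : 0 < z / 2 := half_pos hz
  obtain ⟨M, hM⟩ := exists_norm_le_on_Icc_rpow hq hz2 hg'
  have hterm : ∀ (k : ℕ), ∀ y ∈ Ioi (z / 2), HasDerivAt (fun y : ℝ => g (q ^ (y + k)))
      (log q * (q ^ (y + k) * g' (q ^ (y + k)))) y := by
    intro k y hy
    have hw := (rpow_add_natCast_mem_Ioo hq (hz2.trans hy) k).2
    have := (hg _ hw).comp y (((hasDerivAt_id y).add_const (k : ℝ)).const_rpow hq.1)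
    exact this.congr_deriv (by simp only [id]; ring)
  have hbound : ∀ (k : ℕ), ∀ y ∈ Ioi (z / 2),
      ‖log q * (q ^ (y + k) * g' (q ^ (y + k)))‖ ≤ ‖log q‖ * (q ^ (z / 2) * q ^ k * M) := by
    intro k y hy
    have hw := rpow_add_natCast_mem_Icc hq hy.out.le k
    rw [norm_mul, norm_mul, Real.norm_of_nonneg hw.1]
    have hle := rpow_add_natCast_le hq hy.out.le k
    gcongr
    exacts [hw.1.trans hle, hM _ hw]
  have hu : Summable fun k : ℕ => ‖log q‖ * (q ^ (z / 2) * q ^ k * M) :=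
    (((summable_geometric_of_lt_one hq.1.le hq.2).mul_left _).mul_right _).mul_left _
  have hz' : z ∈ Ioi (z / 2) := half_lt_self hz
  simpa only [tsum_mul_left] using hasDerivAt_tsum_of_isPreconnected hu isOpen_Ioi
    isPreconnected_Ioi hterm hbound hz' (summable_comp_rpow_add hg hg' hq hg0 hz) hz'

end TermwiseSeries

lemma hasDerivAt_div_one_sub {w : ℝ} (hw : w ≠ 1) :
    HasDerivAt (fun w : ℝ => w / (1 - w)) (1 / (1 - w) ^ 2) w := by
  have hw' : 1 - w ≠ 0 := sub_ne_zero.2 hw.symm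
  have := (hasDerivAt_id' w).fun_div ((hasDerivAt_id' w).const_sub 1) hw'
  exact this.congr_deriv (by field_simp; ring)

lemma hasDerivAt_div_one_sub_sq {w : ℝ} (hw : w ≠ 1) :
    HasDerivAt (fun w : ℝ => w / (1 - w) ^ 2) ((1 + w) / (1 - w) ^ 3) w := by
  have hw' : 1 - w ≠ 0 := sub_ne_zero.2 hw.symm
  have := (hasDerivAt_id' w).fun_div (((hasDerivAt_id' w).const_sub 1).fun_pow 2)
    (pow_ne_zero 2 hw')
  exact this.congr_deriv (by field_simp; ring)

lemma continuousOn_div_one_sub_pow {f : ℝ → ℝ} (hf : Continuous f) (n : ℕ) :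
    ContinuousOn (fun w => f w / (1 - w) ^ n) (Iio 1) :=
  hf.continuousOn.div (by fun_prop) fun _ hw => pow_ne_zero n (sub_pos.2 hw).ne'

lemma HasDerivAt.comp_log_div {f : ℝ → ℝ} {f' x c : ℝ} (hf : HasDerivAt f f' (Real.log x / c))
    (hx : x ≠ 0) : HasDerivAt (fun y => f (Real.log y / c)) (f' / (x * c)) x :=
  (hf.comp x ((hasDerivAt_log hx).div_const c)).congr_deriv (by ring)

noncomputable def qDigamma (q z : ℝ) : ℝ :=
  -log (1 - q) + log q * ∑' k : ℕ, q ^ (z + k) / (1 - q ^ (z + k))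

noncomputable def qTrigamma (q z : ℝ) : ℝ :=
  log q ^ 2 * ∑' k : ℕ, q ^ (z + k) / (1 - q ^ (z + k)) ^ 2

noncomputable def qTetragamma (q z : ℝ) : ℝ :=
  log q ^ 3 * ∑' k : ℕ, q ^ (z + k) * (1 + q ^ (z + k)) / (1 - q ^ (z + k)) ^ 3

section QPolygamma

variable {q z : ℝ}

lemma hasDerivAt_qDigamma (hq : q ∈ Ioo 0 1) (hz : 0 < z) :
    HasDerivAt (qDigamma q) (qTrigamma q z) z := by
  have := ((hasDerivAt_tsum_comp_rpow_add (fun w hw => hasDerivAt_div_one_sub hw.out.ne)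
    (continuousOn_div_one_sub_pow continuous_const 2) hq (by simp) hz).const_mul (log q)).const_add
    (-log (1 - q))
  exact this.congr_deriv (by simp only [mul_one_div, qTrigamma]; ring)

lemma hasDerivAt_qTrigamma (hq : q ∈ Ioo 0 1) (hz : 0 < z) :
    HasDerivAt (qTrigamma q) (qTetragamma q z) z := by
  have := (hasDerivAt_tsum_comp_rpow_add (fun w hw => hasDerivAt_div_one_sub_sq hw.out.ne)
    (continuousOn_div_one_sub_pow (by fun_prop) 3) hq (by simp) hz).const_mul (log q ^ 2)
  exact this.congr_deriv (by simp only [← mul_div_assoc, qTetragamma]; ring)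

lemma qTrigamma_pos (hq : q ∈ Ioo 0 1) (hz : 0 < z) : 0 < qTrigamma q z := by
  have hterm : ∀ k : ℕ, 0 < q ^ (z + k) / (1 - q ^ (z + k)) ^ 2 := fun k => by
    obtain ⟨hw0, hw1⟩ := rpow_add_natCast_mem_Ioo hq hz k
    exact div_pos hw0 (pow_pos (sub_pos.2 hw1) 2)
  have hsum := summable_comp_rpow_add (fun w hw => hasDerivAt_div_one_sub_sq hw.out.ne)
    (continuousOn_div_one_sub_pow (by fun_prop) 3) hq (by simp) hz
  exact mul_pos (pow_two_pos_of_ne_zero (log_neg hq.1 hq.2).ne)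
    (hsum.tsum_pos (fun k => (hterm k).le) 0 (hterm 0))

lemma log_add_log_one_sub_add_qDigamma_neg (hq : q ∈ Ioo 0 1) (hz : 0 < z) :
    log q + log (1 - q) + qDigamma q z < 0 := by
  have hsum : 0 ≤ ∑' k : ℕ, q ^ (z + k) / (1 - q ^ (z + k)) := tsum_nonneg fun k => by
    obtain ⟨hw0, hw1⟩ := rpow_add_natCast_mem_Ioo hq hz k
    exact (div_pos hw0 (sub_pos.2 hw1)).le
  have hD : log q + log (1 - q) + qDigamma q z
      = log q * (1 + ∑' k : ℕ, q ^ (z + k) / (1 - q ^ (z + k))) := by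
    unfold qDigamma; ring
  rw [hD]
  exact mul_neg_of_neg_of_pos (log_neg hq.1 hq.2) (by linarith)

end QPolygamma

noncomputable def density (a : ℝ) (P : ℝ → ℝ) (α : ℝ) : ℝ := -1 + a / P α

noncomputable def current (a : ℝ) (P : ℝ → ℝ) (α : ℝ) : ℝ := -α * (1 + density a P α)

section DensityCurrent

variable {a x p p' : ℝ} {P P' : ℝ → ℝ}

lemma hasDerivAt_density (hP : HasDerivAt P p x) (hx : P x ≠ 0) :
    HasDerivAt (density a P) (-a * p / P x ^ 2) x :=
  (((hasDerivAt_const x a).fun_div hP hx).const_add (-1)).congr_deriv (by ring)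

lemma hasDerivAt_current (hP : HasDerivAt P p x) (hx : P x ≠ 0) :
    HasDerivAt (current a P) (-a * (P x - x * p) / P x ^ 2) x := by
  have := (hasDerivAt_id' x).fun_neg.fun_mul ((hasDerivAt_density (a := a) hP hx).const_add 1)
  exact this.congr_deriv (by simp only [density]; field_simp; ring)

lemma deriv_current_div_deriv_density (ha : a ≠ 0) (hP : HasDerivAt P p x) (hx : P x ≠ 0)
    (hp : p ≠ 0) : deriv (current a P) x / deriv (density a P) x = P x / p - x := by
  rw [(hasDerivAt_current hP hx).deriv, (hasDerivAt_density hP hx).deriv]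
  field_simp

variable {U : Set ℝ} (hU : IsOpen U) (hP : ∀ y ∈ U, HasDerivAt P (P' y) y ∧ P y ≠ 0 ∧ P' y ≠ 0)
include hU hP

lemma hasDerivAt_deriv_current_div_deriv_density (ha : a ≠ 0) (hx : x ∈ U)
    (hP' : HasDerivAt P' p' x) :
    HasDerivAt (fun y => deriv (current a P) y / deriv (density a P) y)
      (-(P x * p') / P' x ^ 2) x := by
  obtain ⟨hPx, -, hP'x⟩ := hP x hx
  refine (((hPx.fun_div hP' hP'x).sub (hasDerivAt_id' x)).congr_deriv
    (by field_simp; ring)).congr_of_eventuallyEq ?_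
  filter_upwards [hU.mem_nhds hx] with y hy
  obtain ⟨hPy, hPy0, hP'y⟩ := hP y hy
  exact deriv_current_div_deriv_density ha hPy hPy0 hP'y

theorem density_current_kpz (ha : a ≠ 0) (hx : x ∈ U) (hP' : HasDerivAt P' p' x) :
    DifferentiableOn ℝ (density a P) U ∧ DifferentiableOn ℝ (current a P) U ∧
    (∀ y ∈ U, deriv (density a P) y ≠ 0) ∧
    DifferentiableAt ℝ (fun y => deriv (current a P) y / deriv (density a P) y) x ∧
    -deriv (fun y => deriv (current a P) y / deriv (density a P) y) x / deriv (density a P) x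
      = -P x ^ 3 * p' / (a * P' x ^ 3) := by
  have hρ : ∀ y ∈ U, HasDerivAt (density a P) (-a * P' y / P y ^ 2) y :=
    fun y hy => hasDerivAt_density (hP y hy).1 (hP y hy).2.1
  have hh := hasDerivAt_deriv_current_div_deriv_density hU hP ha hx hP'
  refine ⟨fun y hy => (hρ y hy).differentiableAt.differentiableWithinAt, fun y hy =>
    (hasDerivAt_current (hP y hy).1 (hP y hy).2.1).differentiableAt.differentiableWithinAt,
    fun y hy => ?_, hh.differentiableAt, ?_⟩
  · obtain ⟨-, hPy, hP'y⟩ := hP y hy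
    rw [(hρ y hy).deriv]
    exact div_ne_zero (mul_ne_zero (neg_ne_zero.2 ha) hP'y) (pow_ne_zero 2 hPy)
  · obtain ⟨-, hPx, hP'x⟩ := hP x hx
    rw [hh.deriv, (hρ x hx).deriv]
    field_simp

end DensityCurrent

/-- For `q ∈ (0,1)`, `θ > 0`, with
`ϱ(α) = −1 + 2 log q/(log q + log(1−q) + Ψ_q(log α/log q))` and the steady
state current `j̃(α) = −α(1+ϱ(α))`: both are differentiable on `(0,1)` with
`ϱ'` nonvanishing, `h(α) = j̃'(α)/ϱ'(α)` is differentiable at `α = q^θ`, and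
the KPZ coefficient `λ = −d²j/dϱ² = −h'(q^θ)/ϱ'(q^θ)` equals
`q^θ (Ψ_q'(θ) log q − Ψ_q''(θ)) D(θ)³ / (2 Ψ_q'(θ)³)`. -/
theorem stmt_19 (q θ : ℝ) (hq : q ∈ Set.Ioo (0 : ℝ) 1) (hθ : 0 < θ) :
    let Ψ : ℝ → ℝ := fun z =>
      -Real.log (1 - q) + Real.log q * ∑' k : ℕ, q ^ (z + (k : ℝ)) / (1 - q ^ (z + (k : ℝ)))
    let Ψ' : ℝ → ℝ := fun z =>
      (Real.log q) ^ 2 * ∑' k : ℕ, q ^ (z + (k : ℝ)) / (1 - q ^ (z + (k : ℝ))) ^ 2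
    let Ψ'' : ℝ → ℝ := fun z =>
      (Real.log q) ^ 3 *
        ∑' k : ℕ, q ^ (z + (k : ℝ)) * (1 + q ^ (z + (k : ℝ))) / (1 - q ^ (z + (k : ℝ))) ^ 3
    let D : ℝ := Real.log q + Real.log (1 - q) + Ψ θ
    let ϱ : ℝ → ℝ := fun α =>
      -1 + 2 * Real.log q /
        (Real.log q + Real.log (1 - q) + Ψ (Real.log α / Real.log q))
    let jt : ℝ → ℝ := fun α => -α * (1 + ϱ α)
    let h : ℝ → ℝ := fun α => deriv jt α / deriv ϱ α
    DifferentiableOn ℝ ϱ (Set.Ioo 0 1) ∧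
    DifferentiableOn ℝ jt (Set.Ioo 0 1) ∧
    (∀ α ∈ Set.Ioo (0 : ℝ) 1, deriv ϱ α ≠ 0) ∧
    DifferentiableAt ℝ h (q ^ θ) ∧
    -(deriv h (q ^ θ)) / deriv ϱ (q ^ θ)
      = q ^ θ * (Ψ' θ * Real.log q - Ψ'' θ) * D ^ 3 / (2 * Ψ' θ ^ 3) := by
  intro Ψ Ψ' Ψ'' D ϱ jt h
  have hL : log q < 0 := log_neg hq.1 hq.2
  have hL0 := hL.ne
  have hz : ∀ α ∈ Ioo (0 : ℝ) 1, 0 < log α / log q :=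
    fun α hα => div_pos_of_neg_of_neg (log_neg hα.1 hα.2) hL
  let P α := log q + log (1 - q) + qDigamma q (log α / log q)
  let P' α := qTrigamma q (log α / log q) / (α * log q)
  have hP : ∀ α ∈ Ioo (0 : ℝ) 1, HasDerivAt P (P' α) α ∧ P α ≠ 0 ∧ P' α ≠ 0 := fun α hα =>
    ⟨((hasDerivAt_qDigamma hq (hz α hα)).comp_log_div hα.1.ne').const_add _,
      (log_add_log_one_sub_add_qDigamma_neg hq (hz α hα)).ne,
      div_ne_zero (qTrigamma_pos hq (hz α hα)).ne' (mul_ne_zero hα.1.ne' hL0)⟩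
  have hα : q ^ θ ∈ Ioo (0 : ℝ) 1 := ⟨rpow_pos_of_pos hq.1 θ, rpow_lt_one hq.1.le hq.2 hθ⟩
  have hα0 := hα.1.ne'
  have hzθ : log (q ^ θ) / log q = θ := by rw [log_rpow hq.1, mul_div_cancel_right₀ _ hL0]
  have hP' : HasDerivAt P'
      ((qTetragamma q θ - log q * qTrigamma q θ) / (q ^ θ * log q) ^ 2) (q ^ θ) := by
    have := ((hasDerivAt_qTrigamma hq (hz _ hα)).comp_log_div hα0).fun_div
      ((hasDerivAt_id' _).mul_const (log q)) (mul_ne_zero hα0 hL0)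
    rw [hzθ] at this
    exact this.congr_deriv (by field_simp)
  obtain ⟨hϱ, hjt, hϱ', hh, hkpz⟩ :=
    density_current_kpz (a := 2 * log q) isOpen_Ioo hP (mul_ne_zero two_ne_zero hL0) hα hP'
  refine ⟨hϱ, hjt, hϱ', hh, hkpz.trans ?_⟩
  have hD : D = log q + log (1 - q) + qDigamma q θ := rfl
  have hΨ' : Ψ' θ = qTrigamma q θ := rfl
  have hΨ'' : Ψ'' θ = qTetragamma q θ := rfl
  have hΨ'0 := (qTrigamma_pos hq hθ).ne'
  simp only [P, P', hzθ, hD, hΨ', hΨ'']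
  field_simp
  ring
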